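/- For every real number β with β ∉ {0, 1, −1}, the curve γ : ℝ → ℝ⁴, γ(t) = (cos t, sin t, cos(βt), sin(βt)), is nondegenerate: for every t ∈ ℝ the four vectors γ(t), γ′(t), γ″(t), γ‴(t) are linearly independent over ℝ. (This is the homogeneous curve of Segre type (1ᶜ1ᶜ), second subfamily, in the classification of locally homogeneous nondegenerate curves in ℝP³.) -/

import Mathlib

/-- The homogeneous curve of Segre type (1ᶜ1ᶜ), second subfamily:
`γ(t) = (cos t, sin t, cos βt, sin βt)`. -/
noncomputable def gammaCurve (β : ℝ) : ℝ → (Fin 4 → ℝ) :=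
  fun t => ![Real.cos t, Real.sin t, Real.cos (β * t), Real.sin (β * t)]

lemma hasDerivAt_cos_mul (β t : ℝ) :
    HasDerivAt (fun x => Real.cos (β * x)) (-(β * Real.sin (β * t))) t := by
  have : HasDerivAt (fun x => Real.cos (β * x)) (-Real.sin (β * t) * (β * 1)) t :=
    (Real.hasDerivAt_cos (β * t)).comp t ((hasDerivAt_id t).const_mul β)
  convert this using 1
  ring

lemma hasDerivAt_sin_mul (β t : ℝ) :
    HasDerivAt (fun x => Real.sin (β * x)) (β * Real.cos (β * t)) t := by
  have : HasDerivAt (fun x => Real.sin (β * x)) (Real.cos (β * t) * (β * 1)) t :=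
    (Real.hasDerivAt_sin (β * t)).comp t ((hasDerivAt_id t).const_mul β)
  convert this using 1
  ring

lemma deriv_gamma1 (β : ℝ) :
    deriv (gammaCurve β) = fun t =>
      ![-Real.sin t, Real.cos t, -(β * Real.sin (β * t)), β * Real.cos (β * t)] := by
  funext t
  refine HasDerivAt.deriv (hasDerivAt_pi.2 fun i => ?_)
  fin_cases i <;> simp only [gammaCurve, Matrix.cons_val_zero, Matrix.cons_val_one,
    Matrix.head_cons, Matrix.cons_val_two, Matrix.tail_cons, Matrix.cons_val_three]
  · exact Real.hasDerivAt_cos t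
  · exact Real.hasDerivAt_sin t
  · exact hasDerivAt_cos_mul β t
  · exact hasDerivAt_sin_mul β t

lemma deriv_gamma2 (β : ℝ) :
    deriv (deriv (gammaCurve β)) = fun t =>
      ![-Real.cos t, -Real.sin t, -(β ^ 2 * Real.cos (β * t)),
        -(β ^ 2 * Real.sin (β * t))] := by
  rw [deriv_gamma1]
  funext t
  refine HasDerivAt.deriv (hasDerivAt_pi.2 fun i => ?_)
  fin_cases i <;> simp only [Matrix.cons_val_zero, Matrix.cons_val_one,
    Matrix.head_cons, Matrix.cons_val_two, Matrix.tail_cons, Matrix.cons_val_three]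
  · simpa using (Real.hasDerivAt_sin t).fun_neg
  · exact Real.hasDerivAt_cos t
  · have := ((hasDerivAt_sin_mul β t).const_mul β).fun_neg
    exact this.congr_deriv (by change _ = -(β ^ 2 * Real.cos (β * t)); ring)
  · have := (hasDerivAt_cos_mul β t).const_mul β
    exact this.congr_deriv (by change _ = -(β ^ 2 * Real.sin (β * t)); ring)

lemma deriv_gamma3 (β : ℝ) :
    deriv (deriv (deriv (gammaCurve β))) = fun t =>
      ![Real.sin t, -Real.cos t, β ^ 3 * Real.sin (β * t),
        -(β ^ 3 * Real.cos (β * t))] := by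
  rw [deriv_gamma2]
  funext t
  refine HasDerivAt.deriv (hasDerivAt_pi.2 fun i => ?_)
  fin_cases i <;> simp only [Matrix.cons_val_zero, Matrix.cons_val_one,
    Matrix.head_cons, Matrix.cons_val_two, Matrix.tail_cons, Matrix.cons_val_three]
  · simpa using (Real.hasDerivAt_cos t).fun_neg
  · simpa using (Real.hasDerivAt_sin t).fun_neg
  · have := ((hasDerivAt_cos_mul β t).const_mul (β ^ 2)).fun_neg
    exact this.congr_deriv (by change _ = β ^ 3 * Real.sin (β * t); ring)
  · have := ((hasDerivAt_sin_mul β t).const_mul (β ^ 2)).fun_neg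
    exact this.congr_deriv (by change _ = -(β ^ 3 * Real.cos (β * t)); ring)

/-- For every real `β ∉ {0, 1, −1}`, the curve `γ(t) = (cos t, sin t, cos βt, sin βt)`
is nondegenerate: for every `t ∈ ℝ` the vectors `γ(t), γ′(t), γ″(t), γ‴(t)` are
linearly independent over `ℝ`. -/
theorem segre1c1c_nondegenerate (β : ℝ) (h0 : β ≠ 0) (h1 : β ≠ 1) (h2 : β ≠ -1) :
    ∀ t : ℝ,
      LinearIndependent ℝ
        ![gammaCurve β t,
          iteratedDeriv 1 (gammaCurve β) t,
          iteratedDeriv 2 (gammaCurve β) t,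
          iteratedDeriv 3 (gammaCurve β) t] := by
  intro t
  have e1 : iteratedDeriv 1 (gammaCurve β) = deriv (gammaCurve β) := iteratedDeriv_one
  have e2 : iteratedDeriv 2 (gammaCurve β) = deriv (deriv (gammaCurve β)) := by
    rw [iteratedDeriv_succ, e1]
  have e3 : iteratedDeriv 3 (gammaCurve β) = deriv (deriv (deriv (gammaCurve β))) := by
    rw [iteratedDeriv_succ, e2]
  rw [e1, e2, e3, deriv_gamma3, deriv_gamma2, deriv_gamma1]
  set c := Real.cos t
  set s := Real.sin t
  set C := Real.cos (β * t)
  set S := Real.sin (β * t)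
  set M : Matrix (Fin 4) (Fin 4) ℝ :=
    ![![c, s, C, S],
      ![-s, c, -(β * S), β * C],
      ![-c, -s, -(β ^ 2 * C), -(β ^ 2 * S)],
      ![s, -c, β ^ 3 * S, -(β ^ 3 * C)]] with hM
  have key : LinearIndependent ℝ (fun i => M i) := by
    change LinearIndependent ℝ M.row
    rw [Matrix.linearIndependent_rows_iff_isUnit, Matrix.isUnit_iff_isUnit_det,
      isUnit_iff_ne_zero]
    have hdet : M.det = β * (1 - β ^ 2) ^ 2 := by
      have hc : s ^ 2 + c ^ 2 = 1 := Real.sin_sq_add_cos_sq t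
      have hC : S ^ 2 + C ^ 2 = 1 := Real.sin_sq_add_cos_sq (β * t)
      rw [Matrix.det_succ_row_zero]
      simp [Fin.sum_univ_succ, Matrix.det_fin_three, Matrix.submatrix_apply, Fin.succAbove_zero,
        Fin.succ_succAbove_zero, Fin.succ_succAbove_succ, Fin.succAbove_ne_zero_zero]
      simp [hM, Fin.succAbove, Fin.lt_def]
      linear_combination (β * (1 - β ^ 2) ^ 2 * (S ^ 2 + C ^ 2)) * hc +
        (β * (1 - β ^ 2) ^ 2) * hC
    rw [hdet]
    have hβ2 : (1 : ℝ) - β ^ 2 ≠ 0 := by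
      intro h
      have : (1 - β) * (1 + β) = 0 := by ring_nf; linarith [h]
      rcases mul_eq_zero.1 this with h' | h'
      · exact h1 (by linarith)
      · exact h2 (by linarith)
    exact mul_ne_zero h0 (pow_ne_zero 2 hβ2)
  exact key
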